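/- arXiv:0807.4074 — 7 statements merged into one kernel-verified Lean document; each statement's English description precedes it below -/
import Mathlib

section
/- Let a ≥ 0, t = 2^a and r = ρ(t). Let γ, χ : {0,…,r−1} → {0,…,t−1} be maps with γ injective, and suppose that for all k, l < r with k ≠ l, the Hamming weight |(χ(k) ⊕ χ(l)) ∧ (γ(k) ⊕ γ(l))| is odd. For each k < r define the real t×t matrix A_k by A_k(i,j) = (−1)^{|i ∧ χ(k)|} if i ⊕ j = γ(k), and A_k(i,j) = 0 otherwise (0 ≤ i,j < t). Then A_0,…,A_{r−1} form a square ROD of size [t,t,ρ(t)]: for every x ∈ ℝ^r, (Σ_{k<r} x_k A_k)ᵀ (Σ_{k<r} x_k A_k) = (Σ_{k<r} x_k²)·I_t. -/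
open Matrix

/-- Hamming weight (popcount) of a natural number. -/
def hw (x : ℕ) : ℕ := (Nat.digits 2 x).sum

/-- Hurwitz–Radon number of `2^a`. -/
def rhoExp (a : ℕ) : ℕ := 8 * (a / 4) + 2 ^ (a % 4)

/-!
Each `A_k` is a signed permutation matrix, so `(A_kᵀ A_l)(i, j)` is nonzero only when
`i ⊕ j = γ(k) ⊕ γ(l)`, where it is a product of two signs `(-1)^{|m ∧ c|}` at `m = γ(k) ⊕ i`.
Since `x ↦ (-1)^{|x|}` turns `⊕` into multiplication, `A_kᵀ A_k = I`, and exchanging `k` and `l`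
multiplies that entry by `(-1)^{|(χ(k) ⊕ χ(l)) ∧ (γ(k) ⊕ γ(l))|} = -1`. Hence the `A_k` satisfy
the Hurwitz–Radon relations `A_kᵀ A_l + A_lᵀ A_k = 0` (`k ≠ l`), and the cross terms of
`(∑ x_k A_k)ᵀ (∑ x_k A_k)` cancel in pairs.
-/

open Finset

lemma hw_eq_mod_two_add_hw_div_two (x : ℕ) : hw x = x % 2 + hw (x / 2) := by
  rcases Nat.eq_zero_or_pos x with rfl | hx
  · simp [hw]
  · rw [hw, Nat.digits_def' (by norm_num) hx, List.sum_cons, hw]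

lemma hw_xor_mod_two (x y : ℕ) : hw (x ^^^ y) % 2 = (hw x + hw y) % 2 := by
  induction x using Nat.strong_induction_on generalizing y with
  | _ x ih =>
    rcases Nat.eq_zero_or_pos x with rfl | hx
    · simp [hw]
    · have ih_half := ih (x / 2) (Nat.div_lt_self hx one_lt_two) (y / 2)
      have hbit := @Nat.xor_mod_two_eq x y
      rw [hw_eq_mod_two_add_hw_div_two (x ^^^ y), hw_eq_mod_two_add_hw_div_two x,
        hw_eq_mod_two_add_hw_div_two y, Nat.xor_div_two]
      omega

lemma neg_one_pow_hw_xor {R : Type*} [Ring R] (x y : ℕ) :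
    (-1 : R) ^ hw (x ^^^ y) = (-1) ^ hw x * (-1) ^ hw y := by
  rw [← pow_add, neg_one_pow_eq_pow_mod_two, hw_xor_mod_two, ← neg_one_pow_eq_pow_mod_two]

lemma neg_one_pow_hw_xor_and {R : Type*} [Ring R] (x y c : ℕ) :
    (-1 : R) ^ hw ((x ^^^ y) &&& c) = (-1) ^ hw (x &&& c) * (-1) ^ hw (y &&& c) := by
  rw [Nat.and_xor_distrib_right, neg_one_pow_hw_xor]

lemma neg_one_pow_hw_mul_self {R : Type*} [Ring R] (x : ℕ) :
    (-1 : R) ^ hw x * (-1) ^ hw x = 1 := by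
  rw [← neg_one_pow_hw_xor, Nat.xor_self, hw, Nat.digits_zero, List.sum_nil, pow_zero]

lemma Nat.xor_xor_eq_comm (g g' i j : ℕ) : g ^^^ i ^^^ j = g' ↔ g' ^^^ i ^^^ j = g := by
  constructor <;> rintro rfl <;> simp [Nat.xor_comm, Nat.xor_left_comm]

lemma Nat.xor_xor_eq_self_iff (g i j : ℕ) : g ^^^ i ^^^ j = g ↔ i = j := by
  rw [Nat.xor_assoc, xor_left_eq_self_iff, Nat.xor_eq_zero_iff]

theorem Matrix.sum_smul_transpose_mul_sum_smul {ι n R : Type*} [Fintype ι] [DecidableEq ι]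
    [Fintype n] [DecidableEq n] [CommRing R] (B : ι → Matrix n n R) (hB : ∀ k, (B k)ᵀ * B k = 1)
    (hanti : ∀ k l, k ≠ l → (B k)ᵀ * B l + (B l)ᵀ * B k = 0) (x : ι → R) :
    (∑ k, x k • B k)ᵀ * (∑ k, x k • B k) = (∑ k, x k ^ 2) • 1 := by
  set F : ι × ι → Matrix n n R := fun p => (x p.1 * x p.2) • ((B p.1)ᵀ * B p.2)
  have hexpand : (∑ k, x k • B k)ᵀ * (∑ k, x k • B k) = ∑ p ∈ univ ×ˢ univ, F p := by
    simp only [transpose_sum, transpose_smul, sum_mul_sum, smul_mul_smul, sum_product, F]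
  have hoff : ∑ p ∈ (univ : Finset ι).offDiag, F p = 0 := by
    refine sum_involution (fun p _ => p.swap) (fun p hp => ?_) (fun p hp _ => ?_)
      (fun p hp => by simpa [and_comm, eq_comm] using hp) (fun p _ => p.swap_swap)
    · simp only [F, Prod.fst_swap, Prod.snd_swap, mul_comm (x p.2), ← smul_add]
      rw [hanti _ _ (mem_offDiag.1 hp).2.2, smul_zero]
    · exact fun h => (mem_offDiag.1 hp).2.2 (congrArg Prod.fst h).symm
  rw [hexpand, ← diag_union_offDiag, sum_union (disjoint_diag_offDiag _), hoff, add_zero,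
    sum_diag, sum_smul]
  simp only [F, hB, sq]

section XorSignMatrix

variable {R : Type*} [CommRing R] {a : ℕ}

variable (R) in
def xorSignMatrix (g : Fin (2 ^ a)) (c : ℕ) : Matrix (Fin (2 ^ a)) (Fin (2 ^ a)) R :=
  Matrix.of fun i j => if i.val ^^^ j.val = g.val then (-1) ^ hw (i.val &&& c) else 0

lemma xorSignMatrix_transpose_mul_apply (g g' : Fin (2 ^ a)) (c c' : ℕ) (i j : Fin (2 ^ a)) :
    ((xorSignMatrix R g c)ᵀ * xorSignMatrix R g' c') i j =
      if g.val ^^^ i.val ^^^ j.val = g'.val then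
        (-1) ^ hw ((g.val ^^^ i.val) &&& c) * (-1) ^ hw ((g.val ^^^ i.val) &&& c')
      else 0 := by
  let m₀ : Fin (2 ^ a) := ⟨g.val ^^^ i.val, Nat.xor_lt_two_pow g.isLt i.isLt⟩
  have hm : ∀ m : Fin (2 ^ a), m.val ^^^ i.val = g.val ↔ m = m₀ := fun m => by
    rw [Fin.ext_iff]
    exact xor_eq_iff_left_eq _ _ _
  rw [mul_apply, sum_eq_single m₀ (fun m _ hm₀ => by simp [xorSignMatrix, (hm m).not.2 hm₀])
    (by simp)]
  simp [xorSignMatrix, m₀]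

lemma xorSignMatrix_transpose_mul_self (g : Fin (2 ^ a)) (c : ℕ) :
    (xorSignMatrix R g c)ᵀ * xorSignMatrix R g c = 1 := by
  ext i j
  simp only [xorSignMatrix_transpose_mul_apply, Nat.xor_xor_eq_self_iff, Fin.val_inj,
    neg_one_pow_hw_mul_self, one_apply]

lemma xorSignMatrix_anticomm {g g' : Fin (2 ^ a)} {c c' : ℕ}
    (hodd : Odd (hw ((c ^^^ c') &&& (g.val ^^^ g'.val)))) :
    (xorSignMatrix R g c)ᵀ * xorSignMatrix R g' c' +
      (xorSignMatrix R g' c')ᵀ * xorSignMatrix R g c = 0 := by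
  have hsign : (-1 : R) ^ hw ((g.val ^^^ g'.val) &&& c) * (-1) ^ hw ((g.val ^^^ g'.val) &&& c')
      = -1 := by
    rw [← neg_one_pow_hw_xor, ← Nat.and_xor_distrib_left, Nat.and_comm, hodd.neg_one_pow]
  ext i j
  have hshift : g'.val ^^^ i.val = (g.val ^^^ g'.val) ^^^ (g.val ^^^ i.val) := by
    rw [Nat.xor_comm g.val, Nat.xor_assoc, Nat.xor_xor_cancel_left]
  simp only [Matrix.add_apply, xorSignMatrix_transpose_mul_apply, Nat.xor_xor_eq_comm g'.val,
    Matrix.zero_apply]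
  split_ifs
  · rw [hshift, neg_one_pow_hw_xor_and (g.val ^^^ g'.val) (g.val ^^^ i.val),
      neg_one_pow_hw_xor_and (g.val ^^^ g'.val) (g.val ^^^ i.val)]
    linear_combination
      (-1 : R) ^ hw ((g.val ^^^ i.val) &&& c) * (-1) ^ hw ((g.val ^^^ i.val) &&& c') * hsign
  · rw [add_zero]

end XorSignMatrix

theorem stmt0_general (a : ℕ)
    (γ χ : Fin (rhoExp a) → Fin (2 ^ a))
    (hodd : ∀ k l : Fin (rhoExp a), k ≠ l →
      Odd (hw ((((χ k).val ^^^ (χ l).val)) &&& (((γ k).val ^^^ (γ l).val)))))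
    (A : Fin (rhoExp a) → Matrix (Fin (2 ^ a)) (Fin (2 ^ a)) ℝ)
    (hA : ∀ k i j, A k i j =
      if i.val ^^^ j.val = (γ k).val
      then ((-1 : ℝ)) ^ (hw (i.val &&& (χ k).val))
      else 0) :
    ∀ x : Fin (rhoExp a) → ℝ,
      (∑ k, x k • A k)ᵀ * (∑ k, x k • A k)
        = (∑ k, x k ^ 2) • (1 : Matrix (Fin (2 ^ a)) (Fin (2 ^ a)) ℝ) := by
  obtain rfl : A = fun k => xorSignMatrix ℝ (γ k) (χ k) := funext₃ hA
  exact Matrix.sum_smul_transpose_mul_sum_smul _ (fun k => xorSignMatrix_transpose_mul_self _ _)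
    (fun k l hkl => xorSignMatrix_anticomm (hodd k l hkl))

/-- if `γ` is injective and the odd-overlap condition holds for `(γ, χ)`,
then the matrices `A_k` with `A_k(i,j) = (−1)^{|i ∧ χ(k)|}` when `i ⊕ j = γ(k)` (and `0`
otherwise) form a square ROD of size `[2^a, 2^a, ρ(2^a)]`. -/
theorem stmt0 (a : ℕ)
    (γ χ : Fin (rhoExp a) → Fin (2 ^ a))
    (hγ : Function.Injective γ)
    (hodd : ∀ k l : Fin (rhoExp a), k ≠ l →
      Odd (hw ((((χ k).val ^^^ (χ l).val)) &&& (((γ k).val ^^^ (γ l).val)))))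
    (A : Fin (rhoExp a) → Matrix (Fin (2 ^ a)) (Fin (2 ^ a)) ℝ)
    (hA : ∀ k i j, A k i j =
      if i.val ^^^ j.val = (γ k).val
      then ((-1 : ℝ)) ^ (hw (i.val &&& (χ k).val))
      else 0) :
    ∀ x : Fin (rhoExp a) → ℝ,
      (∑ k, x k • A k)ᵀ * (∑ k, x k • A k)
        = (∑ k, x k ^ 2) • (1 : Matrix (Fin (2 ^ a)) (Fin (2 ^ a)) ℝ) :=
  stmt0_general a γ χ hodd A hA
end

section
/- Let p, n, k be positive integers and let M be a p×n matrix in k real variables x_0,…,x_{k−1}, encoded by s : {0,…,p−1}×{0,…,n−1} → {−1,0,1} and f : {0,…,p−1}×{0,…,n−1} → {0,…,k−1}, with entries M(i,j) = s(i,j)·x_{f(i,j)} (so M(i,j) = 0 iff s(i,j) = 0). Then the following are equivalent. (1) M is a ROD, i.e., MᵀM = (x_0²+⋯+x_{k−1}²)·I_n identically in x_0,…,x_{k−1}. (2) All of the following hold: (2i) for every column j and every variable index v < k there is exactly one row i with s(i,j) ≠ 0 and f(i,j) = v, and for every row i and every v < k there is at most one column j with s(i,j) ≠ 0 and f(i,j)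 = v; (2ii) whenever s(i,j) ≠ 0 and s(i,j′) ≠ 0 with j ≠ j′, there exists a row i′ with s(i′,j′) ≠ 0, f(i′,j′) = f(i,j), s(i′,j) ≠ 0 and f(i′,j) = f(i,j′); (2iii) every proper 2×2 submatrix of M is itself a ROD, i.e., for all rows i ≠ i′ and columns j ≠ j′ such that all four entries M(i,j), M(i,j′), M(i′,j), M(i′,j′) are nonzero and exactly two distinct variables occur among them, the 2×2 matrix M₂ = [[M(i,j), M(i,j′)],[M(i′,j), M(i′,j′)]] satisfies M₂ᵀM₂ = (x_u² + x_v²)·I₂ identically, where x_u, x_v are its two variables. -/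
/-!
Evaluating the identity `MᵀM = (∑ x_v²) • 1` at an indicator vector `e_v` shows that `v` occurs
exactly once in each column and at most once in each row. If a row has nonzero entries with
variables `u ≠ w` in columns `j ≠ j'`, evaluating the `(j, j')` entry at `e_u + e_w` leaves only
that row and the row carrying `w` in column `j`, so the latter carries `u` in column `j'` with the
opposite sign product; this is the `2 × 2` ROD condition. Conversely, the completion property
pairs off the rows contributing to the inner product of columns `j ≠ j'` by a fixed-point-free
involution, and the `2 × 2` condition makes each pair cancel, while uniqueness in columns makes
the squared norm of a column equal to `∑ x_v²`.
-/

open Matrix Finset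

theorem Matrix.transpose_mul_self_eq_smul_one_iff {m n R : Type*} [Fintype m] [DecidableEq n]
    [CommSemiring R] (A : Matrix m n R) (c : R) :
    Aᵀ * A = c • 1 ↔ ∀ j j', ∑ i, A i j * A i j' = if j = j' then c else 0 := by
  simp only [← Matrix.ext_iff, mul_apply, transpose_apply, smul_apply, one_apply, smul_eq_mul,
    mul_ite, mul_one, mul_zero]

theorem Matrix.transpose_mul_self_eq_smul_one_iff_fin_two {R : Type*} [CommSemiring R]
    (A : Matrix (Fin 2) (Fin 2) R) (c : R) :
    Aᵀ * A = c • 1 ↔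
      A 0 0 ^ 2 + A 1 0 ^ 2 = c ∧ A 0 1 ^ 2 + A 1 1 ^ 2 = c ∧
        A 0 0 * A 0 1 + A 1 0 * A 1 1 = 0 := by
  simp only [transpose_mul_self_eq_smul_one_iff, Fin.forall_fin_two, Fin.sum_univ_two]
  simp only [sq, Fin.isValue, ↓reduceIte, zero_ne_one, one_ne_zero, mul_comm (A _ 1) (A _ 0)]
  tauto

theorem Finset.insert_insert_insert_eq_pair {α : Type*} [DecidableEq α] {a b c d : α}
    (hab : a ≠ b) (h : ({a, b, c, d} : Finset α).card = 2) :
    ({a, b, c, d} : Finset α) = {a, b} :=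
  (eq_of_subset_of_card_le (by intro x; simp only [mem_insert, mem_singleton]; tauto)
    (by rw [h, card_pair hab])).symm

theorem intCast_sq_eq_one {z : ℤ} (hz : z = -1 ∨ z = 0 ∨ z = 1) (h : z ≠ 0) :
    (z : ℝ) ^ 2 = 1 := by
  rcases hz with rfl | rfl | rfl <;> simp_all

section SignedVarMatrix

variable {m n κ : Type*} [Fintype m] {s : m → n → ℤ} {f : m → n → κ}

def signedVarMatrix (s : m → n → ℤ) (f : m → n → κ) (x : κ → ℝ) : Matrix m n ℝ :=
  Matrix.of fun i j => (s i j : ℝ) * x (f i j)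

def IsROD [Fintype κ] [DecidableEq n] (s : m → n → ℤ) (f : m → n → κ) : Prop :=
  ∀ x : κ → ℝ, (signedVarMatrix s f x)ᵀ * signedVarMatrix s f x = (∑ v, x v ^ 2) • 1

namespace IsROD

variable [Fintype κ] [DecidableEq n]

theorem sum_mul_eq (hM : IsROD s f) (x : κ → ℝ) (j j' : n) :
    ∑ i, (s i j : ℝ) * x (f i j) * ((s i j' : ℝ) * x (f i j')) =
      if j = j' then ∑ v, x v ^ 2 else 0 :=
  (transpose_mul_self_eq_smul_one_iff _ _).mp (hM x) j j'

theorem existsUnique_col (hs : ∀ i j, s i j = -1 ∨ s i j = 0 ∨ s i j = 1) (hM : IsROD s f)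
    (j : n) (v : κ) : ∃! i, s i j ≠ 0 ∧ f i j = v := by
  classical
  let e : κ → ℝ := Pi.single v 1
  have h := hM.sum_mul_eq e j j
  have hterm : ∀ i, (s i j : ℝ) * e (f i j) * ((s i j : ℝ) * e (f i j)) =
      if s i j ≠ 0 ∧ f i j = v then 1 else 0 := by
    intro i
    by_cases hi : s i j = 0
    · simp [hi]
    · have := intCast_sq_eq_one (hs i j) hi
      by_cases hf : f i j = v <;> simp_all [e, Pi.single_apply, ← sq]
  have hnorm : ∑ w, e w ^ 2 = 1 := by simp [e, Pi.single_apply, sq]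
  simp only [hterm, sum_boole, if_true, hnorm] at h
  rw [Fintype.existsUnique_iff_card_one]
  exact_mod_cast h

theorem col_eq_of_var_eq (hs : ∀ i j, s i j = -1 ∨ s i j = 0 ∨ s i j = 1) (hM : IsROD s f)
    {i : m} {j j' : n} (h : s i j ≠ 0) (h' : s i j' ≠ 0) (hf : f i j = f i j') : j = j' := by
  classical
  by_contra hjj
  let e : κ → ℝ := Pi.single (f i j) 1
  have hsum := hM.sum_mul_eq e j j'
  rw [if_neg hjj, sum_eq_single i] at hsum
  · simp only [e, ← hf, Pi.single_eq_same, mul_one, mul_eq_zero, Int.cast_eq_zero] at hsum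
    tauto
  · intro b _ hb
    by_cases hbf : s b j ≠ 0 ∧ f b j = f i j
    · exact absurd ((hM.existsUnique_col hs j _).unique hbf ⟨h, rfl⟩) hb
    · rw [not_and_or, not_not] at hbf
      rcases hbf with hb0 | hbf
      · simp [hb0]
      · simp [e, Pi.single_apply, hbf]
  · simp

theorem exists_partner (hs : ∀ i j, s i j = -1 ∨ s i j = 0 ∨ s i j = 1) (hM : IsROD s f)
    {i : m} {j j' : n} (hjj : j ≠ j') (h : s i j ≠ 0) (h' : s i j' ≠ 0) :
    ∃ i', s i' j ≠ 0 ∧ f i' j = f i j' ∧ s i' j' ≠ 0 ∧ f i' j' = f i j ∧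
      s i' j * s i' j' = -(s i j * s i j') := by
  classical
  set u := f i j
  set w := f i j'
  have huw : u ≠ w := fun hf => hjj (hM.col_eq_of_var_eq hs h h' hf)
  obtain ⟨i₂, ⟨h₂, hf₂⟩, huniq₂⟩ := hM.existsUnique_col hs j w
  have hi₂ : i ≠ i₂ := by rintro rfl; exact huw hf₂
  let x : κ → ℝ := fun t => if t = u ∨ t = w then 1 else 0
  let T : m → ℝ := fun b => (s b j : ℝ) * x (f b j) * ((s b j' : ℝ) * x (f b j'))
  have hsum : T i + T i₂ = 0 := by
    have hzero := hM.sum_mul_eq x j j'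
    rw [if_neg hjj] at hzero
    rw [← hzero, eq_comm]
    refine sum_eq_add_of_mem i i₂ (mem_univ _) (mem_univ _) hi₂ fun c _ ⟨hci, hci₂⟩ => ?_
    by_cases hc : s c j = 0
    · simp [hc]
    have hcu : f c j ≠ u := fun hcu =>
      hci ((hM.existsUnique_col hs j u).unique ⟨hc, hcu⟩ ⟨h, rfl⟩)
    have hcw : f c j ≠ w := fun hcw => hci₂ (huniq₂ c ⟨hc, hcw⟩)
    simp [x, hcu, hcw]
  have hTi : T i = s i j * s i j' := by simp [T, x, u, w]
  have hTi₂ : T i₂ = -(s i j * s i j') := by rw [← hTi]; linarith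
  have hTi₂_ne : T i₂ ≠ 0 := by
    rw [hTi₂, neg_ne_zero]
    exact_mod_cast mul_ne_zero h h'
  have h₂' : s i₂ j' ≠ 0 := fun h0 => hTi₂_ne (by simp [T, h0])
  have hf₂' : f i₂ j' = u := by
    have huw₂ : f i₂ j' = u ∨ f i₂ j' = w := by
      by_contra hc
      exact hTi₂_ne (by simp [T, x, hc])
    exact huw₂.resolve_right fun hw => hjj (hM.col_eq_of_var_eq hs h₂ h₂' (hf₂.trans hw.symm))
  refine ⟨i₂, h₂, hf₂, h₂', hf₂', ?_⟩
  have hTi₂' : T i₂ = s i₂ j * s i₂ j' := by simp [T, x, hf₂, hf₂']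
  exact_mod_cast hTi₂' ▸ hTi₂

theorem transpose_mul_self_fin_two [DecidableEq κ]
    (hs : ∀ i j, s i j = -1 ∨ s i j = 0 ∨ s i j = 1) (hM : IsROD s f)
    {i i' : m} {j j' : n} (hii : i ≠ i') (hjj : j ≠ j')
    (h₁ : s i j ≠ 0) (h₂ : s i j' ≠ 0) (h₃ : s i' j ≠ 0) (h₄ : s i' j' ≠ 0)
    (hcard : ({f i j, f i j', f i' j, f i' j'} : Finset κ).card = 2) (x : κ → ℝ) :
    (!![(s i j : ℝ) * x (f i j), (s i j' : ℝ) * x (f i j');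
        (s i' j : ℝ) * x (f i' j), (s i' j' : ℝ) * x (f i' j')])ᵀ *
      !![(s i j : ℝ) * x (f i j), (s i j' : ℝ) * x (f i j');
        (s i' j : ℝ) * x (f i' j), (s i' j' : ℝ) * x (f i' j')] =
      (∑ w ∈ ({f i j, f i j', f i' j, f i' j'} : Finset κ), x w ^ 2) • 1 := by
  have huw : f i j ≠ f i j' := fun hf => hjj (hM.col_eq_of_var_eq hs h₁ h₂ hf)
  have hset := insert_insert_insert_eq_pair huw hcard
  have hmem : ∀ a ∈ ({f i j, f i j', f i' j, f i' j'} : Finset κ), a = f i j ∨ a = f i j' := by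
    simp [hset]
  have hw : f i' j = f i j' := by
    refine (hmem _ (by simp)).resolve_left fun hf => hii ?_
    exact (hM.existsUnique_col hs j _).unique ⟨h₁, rfl⟩ ⟨h₃, hf⟩
  have hu : f i' j' = f i j := by
    refine (hmem _ (by simp)).resolve_right fun hf => hii ?_
    exact (hM.existsUnique_col hs j' _).unique ⟨h₂, rfl⟩ ⟨h₄, hf⟩
  obtain ⟨i₂, hs₂, hf₂, -, -, hsign⟩ := hM.exists_partner hs hjj h₁ h₂
  obtain rfl : i₂ = i' := (hM.existsUnique_col hs j _).unique ⟨hs₂, hf₂⟩ ⟨h₃, hw⟩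
  have hsign' : (s i₂ j : ℝ) * s i₂ j' = -(s i j * s i j') := by exact_mod_cast hsign
  rw [hset, sum_pair huw, transpose_mul_self_eq_smul_one_iff_fin_two, hw, hu]
  simp only [of_apply, cons_val', cons_val_zero, cons_val_one, empty_val', cons_val_fin_one]
  refine ⟨?_, ?_, ?_⟩
  · linear_combination x (f i j) ^ 2 * intCast_sq_eq_one (hs i j) h₁ +
      x (f i j') ^ 2 * intCast_sq_eq_one (hs i₂ j) h₃
  · linear_combination x (f i j') ^ 2 * intCast_sq_eq_one (hs i j') h₂ +
      x (f i j) ^ 2 * intCast_sq_eq_one (hs i₂ j') h₄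
  · linear_combination x (f i j) * x (f i j') * hsign'

end IsROD

theorem sum_mul_col_eq_zero [DecidableEq κ] (hcol : ∀ j v, ∃! i, s i j ≠ 0 ∧ f i j = v)
    (hrow : ∀ i v j j', s i j ≠ 0 → f i j = v → s i j' ≠ 0 → f i j' = v → j = j')
    (hcomp : ∀ i j j', j ≠ j' → s i j ≠ 0 → s i j' ≠ 0 →
      ∃ i', s i' j' ≠ 0 ∧ f i' j' = f i j ∧ s i' j ≠ 0 ∧ f i' j = f i j')
    (htwo : ∀ (i i' : m) (j j' : n), i ≠ i' → j ≠ j' →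
      s i j ≠ 0 → s i j' ≠ 0 → s i' j ≠ 0 → s i' j' ≠ 0 →
      ({f i j, f i j', f i' j, f i' j'} : Finset κ).card = 2 →
      ∀ x : κ → ℝ,
        (!![(s i j : ℝ) * x (f i j), (s i j' : ℝ) * x (f i j');
            (s i' j : ℝ) * x (f i' j), (s i' j' : ℝ) * x (f i' j')])ᵀ *
          !![(s i j : ℝ) * x (f i j), (s i j' : ℝ) * x (f i j');
            (s i' j : ℝ) * x (f i' j), (s i' j' : ℝ) * x (f i' j')] =
          (∑ w ∈ ({f i j, f i j', f i' j, f i' j'} : Finset κ), x w ^ 2) • 1)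
    {j j' : n} (hjj : j ≠ j') (x : κ → ℝ) :
    ∑ i, (s i j : ℝ) * x (f i j) * ((s i j' : ℝ) * x (f i j')) = 0 := by
  classical
  have hpartner : ∀ a, ∃ b, s a j ≠ 0 ∧ s a j' ≠ 0 →
      s b j' ≠ 0 ∧ f b j' = f a j ∧ s b j ≠ 0 ∧ f b j = f a j' := fun a =>
    (em (s a j ≠ 0 ∧ s a j' ≠ 0)).elim
      (fun h => (hcomp a j j' hjj h.1 h.2).imp fun _ hb _ => hb)
      (fun h => ⟨a, fun h' => (h h').elim⟩)
  choose g hg using hpartner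
  have hvar_ne : ∀ a, s a j ≠ 0 → s a j' ≠ 0 → f a j ≠ f a j' := fun a h h' hf =>
    hjj (hrow a _ j j' h rfl h' hf.symm)
  have hg_ne : ∀ a, s a j ≠ 0 → s a j' ≠ 0 → g a ≠ a := fun a h h' hga =>
    hvar_ne a h h' (by rw [← (hg a ⟨h, h'⟩).2.2.2, hga])
  rw [← sum_filter_of_ne (p := fun i => s i j ≠ 0 ∧ s i j' ≠ 0) fun i _ hi =>
    ⟨fun h0 => hi (by simp [h0]), fun h0 => hi (by simp [h0])⟩]
  refine sum_involution (fun a _ => g a) (fun a ha => ?_)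
    (fun a ha _ => hg_ne a (mem_filter.mp ha).2.1 (mem_filter.mp ha).2.2)
    (fun a ha => ?_) (fun a ha => ?_)
  all_goals
    obtain ⟨h, h'⟩ := (mem_filter.mp ha).2
    obtain ⟨hb', hfb', hb, hfb⟩ := hg a ⟨h, h'⟩
  · have hcard : ({f a j, f a j', f (g a) j, f (g a) j'} : Finset κ).card = 2 := by
      rw [hfb, hfb', pair_comm (f a j') (f a j)]
      simp [hvar_ne a h h']
    -- the orthogonality of the two columns of this `2 × 2` submatrix is the cancellation
    simpa using ((transpose_mul_self_eq_smul_one_iff_fin_two _ _).mp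
      (htwo a (g a) j j' (hg_ne a h h').symm hjj h h' hb hb' hcard x)).2.2
  · simp [hb, hb']
  · obtain ⟨-, -, hgg, hfgg⟩ := hg (g a) ⟨hb, hb'⟩
    exact (hcol j (f a j)).unique ⟨hgg, hfgg.trans hfb'⟩ ⟨h, rfl⟩

variable [Fintype κ]

theorem sum_mul_self_col_eq (hs : ∀ i j, s i j = -1 ∨ s i j = 0 ∨ s i j = 1)
    (hcol : ∀ j v, ∃! i, s i j ≠ 0 ∧ f i j = v) (x : κ → ℝ) (j : n) :
    ∑ i, (s i j : ℝ) * x (f i j) * ((s i j : ℝ) * x (f i j)) = ∑ v, x v ^ 2 := by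
  have hterm : ∀ i, s i j ≠ 0 →
      (s i j : ℝ) * x (f i j) * ((s i j : ℝ) * x (f i j)) = x (f i j) ^ 2 := fun i h => by
    linear_combination x (f i j) ^ 2 * intCast_sq_eq_one (hs i j) h
  have hs_ne : ∀ i, (s i j : ℝ) * x (f i j) * ((s i j : ℝ) * x (f i j)) ≠ 0 → s i j ≠ 0 :=
    fun i hne h0 => hne (by simp [h0])
  refine sum_bij_ne_zero (fun i _ _ => f i j) (fun _ _ _ => mem_univ _)
    (fun a _ ha b _ hb hab => (hcol j (f a j)).unique ⟨hs_ne a ha, rfl⟩ ⟨hs_ne b hb, hab.symm⟩)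
    (fun v _ hv => ?_) (fun i _ hi => hterm i (hs_ne i hi))
  obtain ⟨i, ⟨hi, rfl⟩, -⟩ := hcol j v
  exact ⟨i, mem_univ _, by rwa [hterm i hi], rfl⟩

end SignedVarMatrix

theorem stmt1_general (p n k : ℕ)
    (s : Fin p → Fin n → ℤ) (hs : ∀ i j, s i j = -1 ∨ s i j = 0 ∨ s i j = 1)
    (f : Fin p → Fin n → Fin k) :
    -- (1) M is a ROD
    (∀ x : Fin k → ℝ,
        (Matrix.of fun (i : Fin p) (j : Fin n) => (s i j : ℝ) * x (f i j))ᵀ *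
          (Matrix.of fun (i : Fin p) (j : Fin n) => (s i j : ℝ) * x (f i j)) =
        (∑ v, x v ^ 2) • (1 : Matrix (Fin n) (Fin n) ℝ))
    ↔
    -- (2i) each variable appears exactly once in each column and at most once in each row
    ((∀ (j : Fin n) (v : Fin k), ∃! i : Fin p, s i j ≠ 0 ∧ f i j = v) ∧
     (∀ (i : Fin p) (v : Fin k) (j j' : Fin n),
        s i j ≠ 0 → f i j = v → s i j' ≠ 0 → f i j' = v → j = j') ∧
    -- (2ii) completion property
     (∀ (i : Fin p) (j j' : Fin n), j ≠ j' → s i j ≠ 0 → s i j' ≠ 0 →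
        ∃ i' : Fin p, s i' j' ≠ 0 ∧ f i' j' = f i j ∧ s i' j ≠ 0 ∧ f i' j = f i j') ∧
    -- (2iii) every proper 2×2 submatrix is a ROD
     (∀ (i i' : Fin p) (j j' : Fin n), i ≠ i' → j ≠ j' →
        s i j ≠ 0 → s i j' ≠ 0 → s i' j ≠ 0 → s i' j' ≠ 0 →
        ({f i j, f i j', f i' j, f i' j'} : Finset (Fin k)).card = 2 →
        ∀ x : Fin k → ℝ,
          (!![(s i j : ℝ) * x (f i j), (s i j' : ℝ) * x (f i j');
              (s i' j : ℝ) * x (f i' j), (s i' j' : ℝ) * x (f i' j')])ᵀ *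
          (!![(s i j : ℝ) * x (f i j), (s i j' : ℝ) * x (f i j');
              (s i' j : ℝ) * x (f i' j), (s i' j' : ℝ) * x (f i' j')]) =
          (∑ w ∈ ({f i j, f i j', f i' j, f i' j'} : Finset (Fin k)), x w ^ 2) •
            (1 : Matrix (Fin 2) (Fin 2) ℝ))) := by
  change IsROD s f ↔ _
  constructor
  · intro hM
    refine ⟨hM.existsUnique_col hs, ?_, ?_, ?_⟩
    · rintro i v j j' h rfl h' hf
      exact hM.col_eq_of_var_eq hs h h' hf.symm
    · intro i j j' hjj h h'
      obtain ⟨i', h₁, hf₁, h₂, hf₂, -⟩ := hM.exists_partner hs hjj h h'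
      exact ⟨i', h₂, hf₂, h₁, hf₁⟩
    · exact fun i i' j j' hii hjj => hM.transpose_mul_self_fin_two hs hii hjj
  · rintro ⟨hcol, hrow, hcomp, htwo⟩ x
    rw [transpose_mul_self_eq_smul_one_iff]
    intro j j'
    split_ifs with hjj
    · subst hjj
      exact sum_mul_self_col_eq hs hcol x j
    · exact sum_mul_col_eq_zero hcol hrow hcomp htwo hjj x

/-- characterization of RODs in terms of proper 2×2 submatrices.
The matrix `M` is encoded by a sign function `s` (values in {−1,0,1}) and a
variable-index function `f`, via `M(i,j) = s(i,j) · x_{f(i,j)}`. -/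
theorem stmt1 (p n k : ℕ) (hp : 0 < p) (hn : 0 < n) (hk : 0 < k)
    (s : Fin p → Fin n → ℤ) (hs : ∀ i j, s i j = -1 ∨ s i j = 0 ∨ s i j = 1)
    (f : Fin p → Fin n → Fin k) :
    -- (1) M is a ROD
    (∀ x : Fin k → ℝ,
        (Matrix.of fun (i : Fin p) (j : Fin n) => (s i j : ℝ) * x (f i j))ᵀ *
          (Matrix.of fun (i : Fin p) (j : Fin n) => (s i j : ℝ) * x (f i j)) =
        (∑ v, x v ^ 2) • (1 : Matrix (Fin n) (Fin n) ℝ))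
    ↔
    -- (2i) each variable appears exactly once in each column and at most once in each row
    ((∀ (j : Fin n) (v : Fin k), ∃! i : Fin p, s i j ≠ 0 ∧ f i j = v) ∧
     (∀ (i : Fin p) (v : Fin k) (j j' : Fin n),
        s i j ≠ 0 → f i j = v → s i j' ≠ 0 → f i j' = v → j = j') ∧
    -- (2ii) completion property
     (∀ (i : Fin p) (j j' : Fin n), j ≠ j' → s i j ≠ 0 → s i j' ≠ 0 →
        ∃ i' : Fin p, s i' j' ≠ 0 ∧ f i' j' = f i j ∧ s i' j ≠ 0 ∧ f i' j = f i j') ∧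
    -- (2iii) every proper 2×2 submatrix is a ROD
     (∀ (i i' : Fin p) (j j' : Fin n), i ≠ i' → j ≠ j' →
        s i j ≠ 0 → s i j' ≠ 0 → s i' j ≠ 0 → s i' j' ≠ 0 →
        ({f i j, f i j', f i' j, f i' j'} : Finset (Fin k)).card = 2 →
        ∀ x : Fin k → ℝ,
          (!![(s i j : ℝ) * x (f i j), (s i j' : ℝ) * x (f i j');
              (s i' j : ℝ) * x (f i' j), (s i' j' : ℝ) * x (f i' j')])ᵀ *
          (!![(s i j : ℝ) * x (f i j), (s i j' : ℝ) * x (f i j');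
              (s i' j : ℝ) * x (f i' j), (s i' j' : ℝ) * x (f i' j')]) =
          (∑ w ∈ ({f i j, f i j', f i' j, f i' j'} : Finset (Fin k)), x w ^ 2) •
            (1 : Matrix (Fin 2) (Fin 2) ℝ))) :=
  stmt1_general p n k s hs f
end

section
/- Let p, n, k ≥ 1 and let A_i, B_i (0 ≤ i < k) be complex p×n matrices such that: (a) for all x ∈ ℂ^k, G(x) = Σ_{i<k} (x_i A_i + conj(x_i) B_i) satisfies G(x)ᴴG(x) = (Σ_{i<k} |x_i|²)·I_n; (b) at every position (r,c), at most one entry among {A_i(r,c), B_i(r,c) : 0 ≤ i < k} is nonzero; (c) there exists a column index c < n such that every nonzero entry among A_i(r,c), B_i(r,c) (0 ≤ r < p, 0 ≤ i < k) has modulus 1/√2. Then 2k ≤ p. In other words, the maximal rate k/p of a scaled COD with scaling in at least one column is 1/2. -/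
/-!
Testing `G(x)ᴴ G(x) = ‖x‖² I` at the unit vector `x = eᵢ` shows that every column of
`Aᵢ + Bᵢ` is a unit vector. In the scaled column `c` each nonzero entry has squared modulus
`1/2`, and `Aᵢ`, `Bᵢ` never overlap, so `Aᵢ` and `Bᵢ` together have exactly two nonzero
entries in column `c`. Since no two dispersion matrices overlap either, these `2k` entries
lie in distinct rows, whence `2k ≤ p`.
-/

open Matrix Finset

theorem conjTranspose_mul_self_add_eq_one {ι m n : Type*} [Fintype ι] [DecidableEq ι]
    [Fintype m] [Fintype n] [DecidableEq n] (A B : ι → Matrix m n ℂ)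
    (hG : ∀ x : ι → ℂ,
      (∑ i, (x i • A i + (starRingEnd ℂ) (x i) • B i))ᴴ *
        (∑ i, (x i • A i + (starRingEnd ℂ) (x i) • B i)) =
      (∑ i, (Complex.normSq (x i) : ℂ)) • (1 : Matrix n n ℂ))
    (i : ι) : (A i + B i)ᴴ * (A i + B i) = 1 := by
  simpa [Pi.single_apply, apply_ite (starRingEnd ℂ), ite_smul, ← ite_add_zero,
    apply_ite Complex.ofReal] using hG (Pi.single i 1)

theorem sum_normSq_col_eq_one {m n : Type*} [Fintype m] [Fintype n] [DecidableEq n]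
    {M : Matrix m n ℂ} (hM : Mᴴ * M = 1) (c : n) : ∑ r, Complex.normSq (M r c) = 1 := by
  have h := congrFun (congrFun hM c) c
  simp only [mul_apply, conjTranspose_apply, one_apply_eq] at h
  exact_mod_cast (by simpa [Complex.normSq_eq_conj_mul_self] using h :
    (∑ r, (Complex.normSq (M r c) : ℂ)) = 1)

theorem sum_normSq_eq_card_support_div_two {ι : Type*} [Fintype ι] (v : ι → ℂ)
    (hv : ∀ r, v r ≠ 0 → ‖v r‖ = (Real.sqrt 2)⁻¹) :
    ∑ r, Complex.normSq (v r) = #{r | v r ≠ 0} / 2 := by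
  have hterm : ∀ r, Complex.normSq (v r) = (if v r ≠ 0 then 1 else 0) * (1 / 2 : ℝ) := by
    intro r
    by_cases h : v r = 0
    · simp [h]
    · rw [Complex.normSq_eq_norm_sq, hv r h, inv_pow, Real.sq_sqrt zero_le_two]
      simp [h]
  simp only [hterm, ← sum_mul, sum_boole]
  ring

theorem card_support_add_card_support_eq_two {ι : Type*} [Fintype ι] (a b : ι → ℂ)
    (hab : ∀ r, a r ≠ 0 → b r = 0)
    (ha : ∀ r, a r ≠ 0 → ‖a r‖ = (Real.sqrt 2)⁻¹)
    (hb : ∀ r, b r ≠ 0 → ‖b r‖ = (Real.sqrt 2)⁻¹)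
    (hunit : ∑ r, Complex.normSq (a r + b r) = 1) :
    #{r | a r ≠ 0} + #{r | b r ≠ 0} = 2 := by
  have hsplit :
      ∀ r, Complex.normSq (a r + b r) = Complex.normSq (a r) + Complex.normSq (b r) := by
    intro r
    by_cases h : a r = 0
    · simp [h]
    · simp [hab r h]
  simp only [hsplit, sum_add_distrib, sum_normSq_eq_card_support_div_two a ha,
    sum_normSq_eq_card_support_div_two b hb] at hunit
  exact_mod_cast (by linarith : (#{r | a r ≠ 0} + #{r | b r ≠ 0} : ℝ) = 2)

theorem sum_card_col_support_le {S m n R : Type*} [Fintype S] [Fintype m] [DecidableEq m]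
    [Zero R] [DecidableEq R] (D : S → Matrix m n R)
    (c : n) (hD : ∀ r s₁ s₂, D s₁ r c ≠ 0 → D s₂ r c ≠ 0 → s₁ = s₂) :
    ∑ s, #{r | D s r c ≠ 0} ≤ Fintype.card m := by
  have hdisj : ((univ : Finset S) : Set S).PairwiseDisjoint
      fun s ↦ ({r | D s r c ≠ 0} : Finset m) := by
    intro s₁ _ s₂ _ hne
    simp only [Function.onFun, disjoint_left, mem_filter, mem_univ, true_and]
    exact fun r h₁ h₂ ↦ hne (hD r s₁ s₂ h₁ h₂)
  rw [← card_biUnion hdisj]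
  exact card_le_univ _

theorem stmt8_general (p n k : ℕ)
    (A B : Fin k → Matrix (Fin p) (Fin n) ℂ)
    (ha : ∀ x : Fin k → ℂ,
      (∑ i, (x i • A i + (starRingEnd ℂ) (x i) • B i))ᴴ *
        (∑ i, (x i • A i + (starRingEnd ℂ) (x i) • B i)) =
      (∑ i, (Complex.normSq (x i) : ℂ)) • (1 : Matrix (Fin n) (Fin n) ℂ))
    (hb : ∀ (r : Fin p) (c : Fin n) (s₁ s₂ : Fin k × Bool),
      (cond s₁.2 (A s₁.1) (B s₁.1)) r c ≠ 0 →
      (cond s₂.2 (A s₂.1) (B s₂.1)) r c ≠ 0 → s₁ = s₂)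
    (hc : ∃ c : Fin n, ∀ (r : Fin p) (i : Fin k),
      (A i r c ≠ 0 → ‖A i r c‖ = (Real.sqrt 2)⁻¹) ∧
      (B i r c ≠ 0 → ‖B i r c‖ = (Real.sqrt 2)⁻¹)) :
    2 * k ≤ p := by
  obtain ⟨c, hc⟩ := hc
  have hpair : ∀ i, #{r | A i r c ≠ 0} + #{r | B i r c ≠ 0} = 2 := fun i ↦
    card_support_add_card_support_eq_two (A i · c) (B i · c)
      (fun r hA ↦ not_not.1 fun hB ↦ by simpa using hb r c (i, true) (i, false) hA hB)
      (fun r ↦ (hc r i).1) (fun r ↦ (hc r i).2)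
      (sum_normSq_col_eq_one (conjTranspose_mul_self_add_eq_one A B ha i) c)
  calc 2 * k = ∑ s : Fin k × Bool, #{r | cond s.2 (A s.1) (B s.1) r c ≠ 0} := by
        simp [Fintype.sum_prod_type, hpair, mul_comm]
    _ ≤ p := by
        simpa using
          sum_card_col_support_le (fun s : Fin k × Bool ↦ cond s.2 (A s.1) (B s.1)) c (hb · c)

/-- a scaled COD (dispersion matrices `A_i, B_i`, at most one nonzero entry
among them at each position) in which some column carries the scaling factor `1/√2` on all
its nonzero entries satisfies `2k ≤ p`; i.e., the maximal rate of a scaled COD with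
scaling in at least one column is `1/2`. -/
theorem stmt8 (p n k : ℕ) (hp : 0 < p) (hn : 0 < n) (hk : 0 < k)
    (A B : Fin k → Matrix (Fin p) (Fin n) ℂ)
    (ha : ∀ x : Fin k → ℂ,
      (∑ i, (x i • A i + (starRingEnd ℂ) (x i) • B i))ᴴ *
        (∑ i, (x i • A i + (starRingEnd ℂ) (x i) • B i)) =
      (∑ i, (Complex.normSq (x i) : ℂ)) • (1 : Matrix (Fin n) (Fin n) ℂ))
    (hb : ∀ (r : Fin p) (c : Fin n) (s₁ s₂ : Fin k × Bool),
      (cond s₁.2 (A s₁.1) (B s₁.1)) r c ≠ 0 →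
      (cond s₂.2 (A s₂.1) (B s₂.1)) r c ≠ 0 → s₁ = s₂)
    (hc : ∃ c : Fin n, ∀ (r : Fin p) (i : Fin k),
      (A i r c ≠ 0 → ‖A i r c‖ = (Real.sqrt 2)⁻¹) ∧
      (B i r c ≠ 0 → ‖B i r c‖ = (Real.sqrt 2)⁻¹)) :
    2 * k ≤ p :=
  stmt8_general p n k A B ha hb hc
end

section
/- For positive integers p, n, k, the following are equivalent: (1) there exist real p×n matrices A_0,…,A_{k−1} such that for all x ∈ ℝ^k, (Σ_{i<k} x_i A_i)ᵀ(Σ_{i<k} x_i A_i) = (Σ_{i<k} x_i²)·I_n (i.e., a ROD of size [p,n,k] exists); (2) there exists a map f : ℝ^k × ℝ^n → ℝ^p, linear in each argument separately, such that ‖f(x,y)‖ = ‖x‖·‖y‖ for all x ∈ ℝ^k and y ∈ ℝ^n, where ‖·‖ denotes the Euclidean norm (i.e., a normed real bilinear map of size [p,n,k] exists). -/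
/-!
Under the matrix–operator dictionary `Matrix.toEuclideanLin`, a family of matrices `A i` is the
same thing as a bilinear map `B x y = (∑ i, x i • A i) y`. For a fixed `x`, the matrix identity
`Mᵀ * M = ‖x‖² • 1` says that the symmetric operator `Mᵀ M - ‖x‖²` has vanishing quadratic form,
i.e. `‖M y‖² = ‖x‖² ‖y‖²` for all `y`; a symmetric operator is determined by its quadratic form.
-/

open Matrix

theorem Matrix.transpose_mul_self_eq_smul_one_iff_s10 {m n : Type*} [Fintype m] [DecidableEq m]
    [Fintype n] [DecidableEq n] (M : Matrix m n ℝ) (c : ℝ) :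
    Mᵀ * M = c • 1 ↔ ∀ y, ‖toEuclideanLin M y‖ ^ 2 = c * ‖y‖ ^ 2 := by
  set T := toEuclideanLin (Mᵀ * M - c • 1)
  have hT : T.IsSymmetric := by
    rw [isSymmetric_toEuclideanLin_iff, ← conjTranspose_eq_transpose_of_trivial]
    exact (isHermitian_conjTranspose_mul_self M).sub (isHermitian_one.smul (.all c))
  have hquad (y) : inner ℝ (T y) y = ‖toEuclideanLin M y‖ ^ 2 - c * ‖y‖ ^ 2 := by
    have hMM : toEuclideanLin (Mᵀ * M) = (toEuclideanLin M).adjoint ∘ₗ toEuclideanLin M := by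
      rw [toLpLin_mul 2 2 2, ← toEuclideanLin_conjTranspose_eq_adjoint,
        conjTranspose_eq_transpose_of_trivial]
    simp [T, hMM, inner_sub_left, real_inner_smul_left, LinearMap.adjoint_inner_left]
  rw [← sub_eq_zero, ← toEuclideanLin.map_eq_zero_iff, ← hT.inner_map_self_eq_zero]
  simp only [hquad, sub_eq_zero]

theorem Matrix.sum_smul_transpose_mul_self_eq_iff {ι m n : Type*} [Fintype ι] [Fintype m]
    [DecidableEq m] [Fintype n] [DecidableEq n] (A : ι → Matrix m n ℝ) :
    (∀ x : ι → ℝ, (∑ i, x i • A i)ᵀ * (∑ i, x i • A i) = (∑ i, x i ^ 2) • 1) ↔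
      ∀ x : ι → ℝ, ∀ y,
        ‖toEuclideanLin (∑ i, x i • A i) y‖ = ‖WithLp.toLp 2 x‖ * ‖y‖ := by
  refine forall_congr' fun x => ?_
  rw [transpose_mul_self_eq_smul_one_iff_s10]
  refine forall_congr' fun y => ?_
  rw [← sq_eq_sq₀ (norm_nonneg _) (by positivity), mul_pow,
    EuclideanSpace.real_norm_sq_eq (WithLp.toLp 2 x)]

theorem EuclideanSpace.sum_smul_map_single {𝕜 ι V : Type*} [RCLike 𝕜] [Fintype ι]
    [DecidableEq ι] [AddCommMonoid V] [Module 𝕜 V] (L : EuclideanSpace 𝕜 ι →ₗ[𝕜] V)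
    (x : EuclideanSpace 𝕜 ι) : ∑ i, x i • L (single i 1) = L x := by
  conv_rhs => rw [← (basisFun ι 𝕜).sum_repr x]
  simp

theorem stmt10_general (p n k : ℕ) :
    (∃ A : Fin k → Matrix (Fin p) (Fin n) ℝ,
      ∀ x : Fin k → ℝ,
        (∑ i, x i • A i)ᵀ * (∑ i, x i • A i) =
          (∑ i, x i ^ 2) • (1 : Matrix (Fin n) (Fin n) ℝ))
    ↔
    (∃ f : EuclideanSpace ℝ (Fin k) → EuclideanSpace ℝ (Fin n) → EuclideanSpace ℝ (Fin p),
      (∀ y, IsLinearMap ℝ fun x => f x y) ∧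
      (∀ x, IsLinearMap ℝ (f x)) ∧
      (∀ x y, ‖f x y‖ = ‖x‖ * ‖y‖)) := by
  simp_rw [sum_smul_transpose_mul_self_eq_iff]
  constructor
  · rintro ⟨A, hA⟩
    let B : EuclideanSpace ℝ (Fin k) →ₗ[ℝ]
        EuclideanSpace ℝ (Fin n) →ₗ[ℝ] EuclideanSpace ℝ (Fin p) :=
      toEuclideanLin.toLinearMap ∘ₗ Fintype.linearCombination ℝ A ∘ₗ
        (WithLp.linearEquiv 2 ℝ (Fin k → ℝ)).toLinearMap
    exact ⟨fun x y => B x y, fun y => (B.flip y).isLinear, fun x => (B x).isLinear,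
      fun x y => by simpa [B, Fintype.linearCombination_apply] using hA x y⟩
  · rintro ⟨f, hfl, hfr, hfn⟩
    let B := LinearMap.mk₂ ℝ f (fun _ _ y => (hfl y).map_add _ _)
      (fun _ _ y => (hfl y).map_smul _ _) (fun x => (hfr x).map_add) (fun _ x => (hfr x).map_smul _)
    refine ⟨fun i => toEuclideanLin.symm (B (EuclideanSpace.single i 1)), fun x y => ?_⟩
    have hB : toEuclideanLin (∑ i, x i • toEuclideanLin.symm (B (EuclideanSpace.single i 1))) =
        B (WithLp.toLp 2 x) := by
      rw [← EuclideanSpace.sum_smul_map_single B]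
      simp
    rw [hB]
    exact hfn _ y

/-- a ROD of size `[p,n,k]` (with arbitrary real linear-combination entries)
exists if and only if a normed real bilinear map of size `[p,n,k]` exists. -/
theorem stmt10 (p n k : ℕ) (hp : 0 < p) (hn : 0 < n) (hk : 0 < k) :
    (∃ A : Fin k → Matrix (Fin p) (Fin n) ℝ,
      ∀ x : Fin k → ℝ,
        (∑ i, x i • A i)ᵀ * (∑ i, x i • A i) =
          (∑ i, x i ^ 2) • (1 : Matrix (Fin n) (Fin n) ℝ))
    ↔
    (∃ f : EuclideanSpace ℝ (Fin k) → EuclideanSpace ℝ (Fin n) → EuclideanSpace ℝ (Fin p),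
      (∀ y, IsLinearMap ℝ fun x => f x y) ∧
      (∀ x, IsLinearMap ℝ (f x)) ∧
      (∀ x y, ‖f x y‖ = ‖x‖ * ‖y‖)) :=
  stmt10_general p n k
end

section
/- Let p, n, k be positive integers. If there exist complex p×n matrices A_i, B_i (0 ≤ i < k) such that for all x ∈ ℂ^k, G(x) = Σ_{i<k} (x_i A_i + conj(x_i) B_i) satisfies G(x)ᴴG(x) = (Σ_{i<k} |x_i|²)·I_n, then there exist real 2p×2n matrices C_0,…,C_{2k−1} such that for all u ∈ ℝ^{2k}, (Σ_{j<2k} u_j C_j)ᵀ(Σ_{j<2k} u_j C_j) = (Σ_{j<2k} u_j²)·I_{2n}. That is, existence of a [p,n,k] complex design implies existence of a [2p,2n,2k] real design, obtained by replacing each complex entry by its 2×2 real matrix representation. -/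
/-!
Replacing each complex entry `a + b i` by its real `2 × 2` block is an `ℝ`-linear,
multiplicative map that turns `ᴴ` into `ᵀ`. Writing `x_i = u_i + v_i i`, the combination
`x_i A_i + x̄_i B_i` equals `u_i (A_i + B_i) + v_i (i (A_i - B_i))`, so the `2k` real matrices
`realify (A_i + B_i)`, `realify (i (A_i - B_i))` combine to `realify (G x)`, and applying `realify`
to `G(x)ᴴ G(x) = |x|² I` gives the real design identity with `|x|² = Σ u_i² + v_i²`.
-/

open Matrix Complex
open scoped ComplexConjugate

section Realify

variable {l m n : Type*}

/-- Each entry `a + b i` becomes the block `!![a, -b; b, a]`, with rows and columns grouped as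
(real part, imaginary part). -/
def realify : Matrix m n ℂ →ₗ[ℝ] Matrix (m ⊕ m) (n ⊕ n) ℝ where
  toFun M := fromBlocks (M.map re) (-M.map im) (M.map im) (M.map re)
  map_add' M N := by ext (i | i) (j | j) <;> simp [add_comm]
  map_smul' r M := by ext (i | i) (j | j) <;> simp

theorem realify_conjTranspose (M : Matrix m n ℂ) : realify Mᴴ = (realify M)ᵀ := by
  ext (i | i) (j | j) <;> simp [realify]

theorem realify_mul [Fintype n] (M : Matrix l n ℂ) (N : Matrix n m ℂ) :
    realify (M * N) = realify M * realify N := by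
  ext (i | i) (j | j) <;>
    simp [realify, mul_apply, Finset.sum_add_distrib, Finset.sum_sub_distrib] <;> ring

theorem realify_one [DecidableEq n] : realify (1 : Matrix n n ℂ) = 1 := by
  ext (i | i) (j | j) <;> simp [realify, one_apply, apply_ite]

theorem realify_ofReal_smul (r : ℝ) (M : Matrix m n ℂ) :
    realify ((r : ℂ) • M) = r • realify M := by
  rw [← map_smul, ← Complex.coe_smul]

theorem smul_add_add_smul_I_smul_sub (a b : ℝ) (A B : Matrix m n ℂ) :
    a • (A + B) + b • (I • (A - B)) = (⟨a, b⟩ : ℂ) • A + conj (⟨a, b⟩ : ℂ) • B := by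
  ext i j : 2
  apply Complex.ext <;> simp <;> ring

end Realify

section Designs

variable {ι κ m n m' n' : Type*} [Fintype ι] [Fintype κ] [Fintype m] [Fintype m']
  [DecidableEq n] [DecidableEq n']

def IsComplexDesign (A B : ι → Matrix m n ℂ) : Prop :=
  ∀ x : ι → ℂ, (∑ i, (x i • A i + conj (x i) • B i))ᴴ * (∑ i, (x i • A i + conj (x i) • B i)) =
    (∑ i, (normSq (x i) : ℂ)) • 1

def IsRealDesign (C : ι → Matrix m n ℝ) : Prop :=
  ∀ u : ι → ℝ, (∑ j, u j • C j)ᵀ * (∑ j, u j • C j) = (∑ j, u j ^ 2) • 1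

theorem IsRealDesign.reindex {C : ι → Matrix m n ℝ} (hC : IsRealDesign C) (eι : ι ≃ κ)
    (em : m ≃ m') (en : n ≃ n') : IsRealDesign fun j => Matrix.reindex em en (C (eι.symm j)) := by
  intro u
  have hsum : ∑ j, u j • Matrix.reindex em en (C (eι.symm j)) =
      Matrix.reindex em en (∑ i, u (eι i) • C i) := by
    rw [← Equiv.sum_comp eι]
    ext i j
    simp [Matrix.sum_apply]
  rw [hsum, transpose_reindex, reindex_apply, reindex_apply, submatrix_mul_equiv, hC,
    Equiv.sum_comp eι fun j => u j ^ 2, ← submatrix_one_equiv en.symm]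
  rfl

theorem IsComplexDesign.isRealDesign_realify {A B : ι → Matrix m n ℂ} (h : IsComplexDesign A B) :
    IsRealDesign (Sum.elim (fun i => realify (A i + B i)) fun i => realify (I • (A i - B i))) := by
  intro u
  set x : ι → ℂ := fun i => ⟨u (.inl i), u (.inr i)⟩
  have hsum :
      ∑ j, u j • Sum.elim (fun i => realify (A i + B i)) (fun i => realify (I • (A i - B i))) j =
        realify (∑ i, (x i • A i + conj (x i) • B i)) := by
    simp only [Fintype.sum_sum_type, Sum.elim_inl, Sum.elim_inr, ← Finset.sum_add_distrib,
      ← map_smul, ← map_add, ← map_sum, smul_add_add_smul_I_smul_sub]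
    rfl
  have hnorm : ∑ i, (normSq (x i) : ℂ) = ((∑ j, u j ^ 2 : ℝ) : ℂ) := by
    simp [x, Fintype.sum_sum_type, normSq_mk, Finset.sum_add_distrib, sq]
  rw [hsum, ← realify_conjTranspose, ← realify_mul, h x, hnorm, realify_ofReal_smul, realify_one]

end Designs

theorem stmt11_general (p n k : ℕ)
    (h : ∃ A B : Fin k → Matrix (Fin p) (Fin n) ℂ,
      ∀ x : Fin k → ℂ,
        (∑ i, (x i • A i + (starRingEnd ℂ) (x i) • B i))ᴴ *
          (∑ i, (x i • A i + (starRingEnd ℂ) (x i) • B i)) =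
        (∑ i, (Complex.normSq (x i) : ℂ)) • (1 : Matrix (Fin n) (Fin n) ℂ)) :
    ∃ C : Fin (2 * k) → Matrix (Fin (2 * p)) (Fin (2 * n)) ℝ,
      ∀ u : Fin (2 * k) → ℝ,
        (∑ j, u j • C j)ᵀ * (∑ j, u j • C j) =
          (∑ j, u j ^ 2) • (1 : Matrix (Fin (2 * n)) (Fin (2 * n)) ℝ) := by
  obtain ⟨A, B, hAB⟩ := h
  let double (r : ℕ) : Fin r ⊕ Fin r ≃ Fin (2 * r) :=
    finSumFinEquiv.trans (finCongr (two_mul r).symm)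
  exact ⟨_, (IsComplexDesign.isRealDesign_realify hAB).reindex (double k) (double p) (double n)⟩

/-- existence of a `[p,n,k]` complex design (with arbitrary complex
linear-combination entries) implies existence of a `[2p,2n,2k]` real design. -/
theorem stmt11 (p n k : ℕ) (hp : 0 < p) (hn : 0 < n) (hk : 0 < k)
    (h : ∃ A B : Fin k → Matrix (Fin p) (Fin n) ℂ,
      ∀ x : Fin k → ℂ,
        (∑ i, (x i • A i + (starRingEnd ℂ) (x i) • B i))ᴴ *
          (∑ i, (x i • A i + (starRingEnd ℂ) (x i) • B i)) =
        (∑ i, (Complex.normSq (x i) : ℂ)) • (1 : Matrix (Fin n) (Fin n) ℂ)) :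
    ∃ C : Fin (2 * k) → Matrix (Fin (2 * p)) (Fin (2 * n)) ℝ,
      ∀ u : Fin (2 * k) → ℝ,
        (∑ j, u j • C j)ᵀ * (∑ j, u j • C j) =
          (∑ j, u j ^ 2) • (1 : Matrix (Fin (2 * n)) (Fin (2 * n)) ℝ) :=
  stmt11_general p n k h
end

section
/- Let n ≥ 8 and let Q_n be the real n×n matrix with Q_n(i,j) = A(i,j) for 0 ≤ i,j < 8, Q_n(i,i) = 1 for 8 ≤ i < n, and Q_n(i,j) = 0 otherwise, where A(i,j) = 1/√2 if i < 4 and (j = i or j = 7−i); A(i,j) = 1/√2 if i ≥ 4 and j = 7−i; A(i,j) = −1/√2 if i ≥ 4 and j = i; and A(i,j) = 0 otherwise. Then: (1) Q_nᵀQ_n = I_n, so for any complex p×n matrix G with GᴴG = c·I_n (c a scalar polynomial in the design variables), also (G·Q_n)ᴴ(G·Q_n) = c·I_n; and (2) if G is a complex p×n matrix such that for every row r, for each j ∈ {0,1,2,3} exactly one of G(r,j) and G(r,7−j) is nonzero, and G(r,j) ≠ 0 for all 8 ≤ j < n, then every entry of G·Q_n is nonzero. -/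
open Matrix

/-- The 8×8 block `A`: `A(i,j) = 1/√2` if `i < 4` and (`j = i` or `j = 7−i`);
`A(i,j) = 1/√2` if `i ≥ 4` and `j = 7−i`; `A(i,j) = −1/√2` if `i ≥ 4` and `j = i`;
`A(i,j) = 0` otherwise. -/
noncomputable def Aent (i j : ℕ) : ℝ :=
  if i < 4 then (if j = i ∨ j = 7 - i then (Real.sqrt 2)⁻¹ else 0)
  else (if j = 7 - i then (Real.sqrt 2)⁻¹ else if j = i then -(Real.sqrt 2)⁻¹ else 0)

/-- The postmultiplication matrix `Q_n`: `Q_n(i,j) = A(i,j)` for `i, j < 8`,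
`Q_n(i,i) = 1` for `8 ≤ i < n`, and `Q_n(i,j) = 0` otherwise. -/
noncomputable def Qmat (n : ℕ) : Matrix (Fin n) (Fin n) ℝ :=
  Matrix.of fun i j =>
    if i.val < 8 ∧ j.val < 8 then Aent i.val j.val
    else if 8 ≤ i.val ∧ i = j then 1 else 0

/-!
`Q_n` is block diagonal, `diag(A, I_{n-8})`, and `A = S/√2` for a matrix `S` with entries in
`{0, ±1}` and `SᵀS = 2I`; so `Q_n` is orthogonal, and postmultiplying by a real orthogonal matrix
preserves `GᴴG = cI`.

For `c < 8` the column `c` of `Q_n` has exactly two nonzero entries, `±1/√2` in row `c` and `1/√2`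
in row `7 - c`, so `(G Q_n)(r, c)` is a combination of `G(r, c)` and `G(r, 7 - c)` with nonzero
coefficients, and exactly one of these two entries is nonzero. For `c ≥ 8` the column is `e_c`.
-/

def Asign : Matrix (Fin 8) (Fin 8) ℤ :=
  of fun i j =>
    if i.val < 4 then (if j.val = i.val ∨ j.val = 7 - i.val then 1 else 0)
    else if j.val = 7 - i.val then 1 else if j.val = i.val then -1 else 0

lemma Asign_transpose_mul_self : Asignᵀ * Asign = 2 := by
  decide

noncomputable def Amat : Matrix (Fin 8) (Fin 8) ℝ := of fun i j => Aent i j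

lemma Amat_eq_smul : Amat = (√2)⁻¹ • Asign.map (Int.castRingHom ℝ) := by
  ext i j
  simp only [Amat, Aent, Asign, of_apply, Matrix.smul_apply, Matrix.map_apply, smul_eq_mul]
  split_ifs <;> simp

lemma Amat_transpose_mul_self : Amatᵀ * Amat = 1 := by
  have h : ((√2)⁻¹ * (√2)⁻¹ : ℝ) * 2 = 1 := by
    rw [← mul_inv, Real.mul_self_sqrt zero_le_two, inv_mul_cancel₀ two_ne_zero]
  rw [Amat_eq_smul, transpose_smul, smul_mul_smul_comm, ← transpose_map, ← Matrix.map_mul,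
    Asign_transpose_mul_self, Matrix.map_ofNat (map_zero _)]
  ext i j
  rcases eq_or_ne i j with rfl | hij <;> simp [*]

def finSumFinEquivOfLE {k n : ℕ} (h : k ≤ n) : Fin k ⊕ Fin (n - k) ≃ Fin n :=
  finSumFinEquiv.trans (finCongr (by omega))

lemma Qmat_submatrix_finSumFinEquivOfLE {n : ℕ} (hn : 8 ≤ n) :
    (Qmat n).submatrix (finSumFinEquivOfLE hn) (finSumFinEquivOfLE hn) = fromBlocks Amat 0 0 1 := by
  ext (a | a) (b | b) <;> simp [Qmat, Amat, finSumFinEquivOfLE, one_apply, Fin.ext_iff]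
  omega

section Orthogonal

variable {l m p R : Type*} [Fintype l] [Fintype m] [DecidableEq l] [DecidableEq m]

lemma transpose_mul_self_eq_one_of_submatrix [CommSemiring R] {M : Matrix m m R} (e : l ≃ m)
    (h : (M.submatrix e e)ᵀ * M.submatrix e e = 1) : Mᵀ * M = 1 := by
  rw [transpose_submatrix, submatrix_mul_equiv, ← submatrix_one_equiv e] at h
  exact (reindex e.symm e.symm).injective h

lemma fromBlocks_transpose_mul_self [CommSemiring R] {A : Matrix l l R} (hA : Aᵀ * A = 1) :
    (fromBlocks A 0 0 (1 : Matrix m m R))ᵀ * fromBlocks A 0 0 1 = 1 := by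
  simp [fromBlocks_transpose, fromBlocks_multiply, hA]

lemma conjTranspose_map_ofReal_mul_self {Q : Matrix m m ℝ} (hQ : Qᵀ * Q = 1) :
    (Q.map Complex.ofReal)ᴴ * Q.map Complex.ofReal = 1 := by
  rw [← conjTranspose_map _ fun x => (Complex.conj_ofReal x).symm,
    conjTranspose_eq_transpose_of_trivial]
  change Qᵀ.map Complex.ofRealHom * Q.map Complex.ofRealHom = 1
  rw [← Matrix.map_mul, hQ, Matrix.map_one _ (map_zero _) (map_one _)]

lemma conjTranspose_mul_self_mul_of_unitary [Fintype p] [CommSemiring R] [StarRing R]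
    {G : Matrix p m R} {U : Matrix m m R} {c : R} (hU : Uᴴ * U = 1) (hG : Gᴴ * G = c • 1) :
    (G * U)ᴴ * (G * U) = c • 1 := by
  rw [conjTranspose_mul, Matrix.mul_assoc, ← Matrix.mul_assoc Gᴴ, hG, smul_mul_assoc,
    Matrix.one_mul, mul_smul_comm, hU]

end Orthogonal

lemma Qmat_transpose_mul_self {n : ℕ} (hn : 8 ≤ n) : (Qmat n)ᵀ * Qmat n = 1 :=
  transpose_mul_self_eq_one_of_submatrix (finSumFinEquivOfLE hn) <| by
    rw [Qmat_submatrix_finSumFinEquivOfLE hn]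
    exact fromBlocks_transpose_mul_self Amat_transpose_mul_self

lemma Qmat_apply_of_lt {n : ℕ} (hn : 8 ≤ n) {c : Fin n} (hc : c.val < 8) (i : Fin n) :
    Qmat n i c = (if i = c then (if c.val < 4 then (√2)⁻¹ else -(√2)⁻¹) else 0) +
      (if i = ⟨7 - c.val, by omega⟩ then (√2)⁻¹ else 0) := by
  simp only [Qmat, Aent, of_apply, Fin.ext_iff]
  split_ifs <;> first | omega | simp

lemma Qmat_apply_of_ge {n : ℕ} {c : Fin n} (hc : 8 ≤ c.val) (i : Fin n) :
    Qmat n i c = if i = c then 1 else 0 := by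
  simp only [Qmat, of_apply]
  split_ifs <;> first | rfl | omega

lemma mul_map_ofReal_Qmat_apply_of_lt {p n : ℕ} (hn : 8 ≤ n) (G : Matrix (Fin p) (Fin n) ℂ)
    (r : Fin p) {c : Fin n} (hc : c.val < 8) :
    (G * (Qmat n).map Complex.ofReal) r c =
      G r c * ((if c.val < 4 then (√2)⁻¹ else -(√2)⁻¹ : ℝ) : ℂ) +
        G r ⟨7 - c.val, by omega⟩ * ((√2)⁻¹ : ℝ) := by
  simp only [mul_apply, map_apply, Qmat_apply_of_lt hn hc, Complex.ofReal_add,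
    apply_ite Complex.ofReal, Complex.ofReal_zero, mul_add, Finset.sum_add_distrib, mul_ite,
    mul_zero, Finset.sum_ite_eq', Finset.mem_univ, if_true]

lemma mul_map_ofReal_Qmat_apply_of_ge {p n : ℕ} (G : Matrix (Fin p) (Fin n) ℂ)
    (r : Fin p) {c : Fin n} (hc : 8 ≤ c.val) :
    (G * (Qmat n).map Complex.ofReal) r c = G r c := by
  simp [mul_apply, Qmat_apply_of_ge hc, apply_ite Complex.ofReal]

lemma xor_of_lt_eight {n : ℕ} (hn : 7 < n) {P : Fin n → Prop}
    (hP : ∀ (j : ℕ) (hj : j < 4), Xor (P ⟨j, by omega⟩) (P ⟨7 - j, by omega⟩))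
    {c : Fin n} (hc : c.val < 8) : Xor (P c) (P ⟨7 - c.val, by omega⟩) := by
  by_cases hc4 : c.val < 4
  · exact hP c hc4
  · have hcc : (⟨7 - (7 - c.val), by omega⟩ : Fin n) = c := Fin.ext (by simp only; omega)
    have := hP (7 - c.val) (by omega)
    rwa [hcc, xor_comm] at this

lemma mul_add_mul_ne_zero_of_xor {R : Type*} [NonUnitalNonAssocSemiring R] [NoZeroDivisors R]
    {x y a b : R} (hxy : Xor (x ≠ 0) (y ≠ 0)) (ha : a ≠ 0) (hb : b ≠ 0) : x * a + y * b ≠ 0 := by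
  rcases hxy with ⟨hx, hy⟩ | ⟨hy, hx⟩
  · rw [not_ne_iff.mp hy, zero_mul, add_zero]
    exact mul_ne_zero hx ha
  · rw [not_ne_iff.mp hx, zero_mul, zero_add]
    exact mul_ne_zero hy hb

/-- (1) `Q_nᵀQ_n = I_n`, hence postmultiplication by `Q_n` preserves
`GᴴG = c·I_n`; (2) if the first eight columns of `G` have complementary zero patterns in
the column pairs `(j, 7−j)` (`j = 0,1,2,3`) and the remaining columns of `G` have no zero
entries, then `G·Q_n` has no zero entries. -/
theorem stmt12 (n : ℕ) (hn : 8 ≤ n) :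
    ((Qmat n)ᵀ * Qmat n = 1 ∧
      ∀ (p : ℕ) (G : Matrix (Fin p) (Fin n) ℂ) (c : ℂ),
        Gᴴ * G = c • (1 : Matrix (Fin n) (Fin n) ℂ) →
        (G * (Qmat n).map Complex.ofReal)ᴴ * (G * (Qmat n).map Complex.ofReal) =
          c • (1 : Matrix (Fin n) (Fin n) ℂ)) ∧
    (∀ (p : ℕ) (G : Matrix (Fin p) (Fin n) ℂ),
      (∀ r : Fin p,
        (∀ (j : ℕ) (hj : j < 4),
          Xor' (G r ⟨j, by omega⟩ ≠ 0) (G r ⟨7 - j, by omega⟩ ≠ 0)) ∧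
        (∀ j : Fin n, 8 ≤ j.val → G r j ≠ 0)) →
      ∀ (r : Fin p) (c : Fin n), (G * (Qmat n).map Complex.ofReal) r c ≠ 0) := by
  have hQ := Qmat_transpose_mul_self hn
  refine ⟨⟨hQ, fun p G c hG =>
    conjTranspose_mul_self_mul_of_unitary (conjTranspose_map_ofReal_mul_self hQ) hG⟩, ?_⟩
  intro p G hG r c
  rcases lt_or_ge c.val 8 with hc | hc
  · rw [mul_map_ofReal_Qmat_apply_of_lt hn G r hc]
    refine mul_add_mul_ne_zero_of_xor
      (xor_of_lt_eight hn (P := fun i => G r i ≠ 0) (hG r).1 hc) ?_ (by simp)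
    split_ifs <;> simp
  · rw [mul_map_ofReal_Qmat_apply_of_ge G r hc]
    exact (hG r).2 c hc
end

section
/- For positive integers n, k define the Hopf–Stiefel number n∘k = min{ p ≥ 1 : for every i with 0 ≤ i ≤ p, if i < n and p − i < k then the binomial coefficient C(p,i) is even } (equivalently, the least p with (x+y)^p = 0 in F₂[x,y]/(x^n, y^k); this minimum exists). Then n∘k is commutative (n∘k = k∘n) and: (I) if k ≤ l then n∘k ≤ n∘l; (II) n∘k = 2^m if and only if n ≤ 2^m, k ≤ 2^m and n + k > 2^m; (III) if n ≤ 2^m then n∘(k + 2^m) = (n∘k) + 2^m. -/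
/-!
Over `𝔽₂` the Frobenius gives `(1 + X)^(q + 2^m) = (1 + X)^q (1 + X^(2^m))`, so the binomial
coefficients `C(q + 2^m, i)` and `C(q, i)` have the same parity for `i < 2^m`. This yields (III)
directly and shows that `2^m` works whenever `n, k ≤ 2^m`. Conversely, when `n + k > 2^m`, every
`p < 2^m` has an odd `C(p, i)` in the window `p - k < i < n`: induct on `m`, stripping the top bit
of `p` and moving it into `i` or into `p - i`. Commutativity is `C(p, i) = C(p, p - i)` and (I) is
the monotonicity of the defining condition in `k`.
-/

open Polynomial

/-- The Hopf–Stiefel number `n∘k`: the least `p ≥ 1` such that `C(p,i)` is even for every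
`i ≤ p` with `i < n` and `p − i < k`; equivalently the least `p` with `(x+y)^p = 0` in
`F₂[x,y]/(x^n, y^k)`. -/
noncomputable def circ (n k : ℕ) : ℕ :=
  sInf {p : ℕ | 1 ≤ p ∧ ∀ i ≤ p, i < n → p - i < k → Even (Nat.choose p i)}

namespace HopfStiefel

theorem cast_choose_add_two_pow (q : ℕ) {m i : ℕ} (hi : i < 2 ^ m) :
    ((q + 2 ^ m).choose i : ZMod 2) = q.choose i := by
  have frobenius :
      (X + 1 : (ZMod 2)[X]) ^ (q + 2 ^ m) = (X + 1) ^ q * X ^ 2 ^ m + (X + 1) ^ q := by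
    rw [pow_add, add_pow_char_pow, one_pow, mul_add, mul_one]
  simpa [coeff_X_add_one_pow, coeff_mul_X_pow', not_le_of_gt hi] using
    congrArg (coeff · i) frobenius

theorem even_choose_add_two_pow_iff (q : ℕ) {m i : ℕ} (hi : i < 2 ^ m) :
    Even ((q + 2 ^ m).choose i) ↔ Even (q.choose i) := by
  simp only [← ZMod.natCast_eq_zero_iff_even, cast_choose_add_two_pow q hi]

theorem even_choose_two_pow {m i : ℕ} (h0 : 0 < i) (hi : i < 2 ^ m) :
    Even ((2 ^ m).choose i) := by
  simpa [Nat.choose_eq_zero_of_lt h0] using even_choose_add_two_pow_iff 0 hi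

/-- `(x + y)^p = 0` in `𝔽₂[x,y]/(x^n, y^k)`. -/
def Vanishes (n k p : ℕ) : Prop :=
  ∀ i ≤ p, i < n → p - i < k → Even (p.choose i)

variable {n k l m p : ℕ}

theorem Vanishes.symm (h : Vanishes n k p) : Vanishes k n p := fun i hi hik hin => by
  simpa [Nat.choose_symm hi] using h (p - i) (Nat.sub_le p i) (by omega) (by omega)

theorem Vanishes.of_le (hkl : k ≤ l) (h : Vanishes n l p) : Vanishes n k p :=
  fun i hi hin hik => h i hi hin (hik.trans_le hkl)

theorem vanishes_of_add_le (h : n + k ≤ p + 1) : Vanishes n k p :=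
  fun i _ hin hik => by omega

theorem Vanishes.le (hk : 0 < k) (h : Vanishes n k p) : n ≤ p := by
  by_contra! hp
  simpa using h p le_rfl hp (by simpa using hk)

theorem vanishes_two_pow (hn : n ≤ 2 ^ m) (hk : k ≤ 2 ^ m) : Vanishes n k (2 ^ m) :=
  fun i _ hin hik => even_choose_two_pow (by omega) (by omega)

theorem vanishes_add_two_pow_iff (hn : n ≤ 2 ^ m) :
    Vanishes n (k + 2 ^ m) (p + 2 ^ m) ↔ Vanishes n k p := by
  constructor
  · intro h i hi hin hik
    simpa [even_choose_add_two_pow_iff p (hin.trans_le hn)] using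
      h i (by omega) hin (by omega)
  · intro h i _ hin hik
    rw [even_choose_add_two_pow_iff p (hin.trans_le hn)]
    rcases le_or_gt i p with hip | hpi
    · exact h i hip hin (by omega)
    · simp [Nat.choose_eq_zero_of_lt hpi]

theorem exists_odd_choose_of_lt_two_pow (hn : 0 < n) (hk : 0 < k) (hp : p < 2 ^ m)
    (hnk : 2 ^ m < n + k) : ∃ i ≤ p, i < n ∧ p - i < k ∧ Odd (p.choose i) := by
  induction m generalizing n k p with
  | zero =>
    obtain rfl : p = 0 := by simpa using hp
    exact ⟨0, le_rfl, hn, hk, by simp⟩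
  | succ m ih =>
    rw [pow_succ, mul_two] at hp hnk
    rcases lt_or_ge p (2 ^ m) with hp' | hp'
    · exact ih hn hk hp' (by omega)
    obtain ⟨q, rfl⟩ := Nat.exists_eq_add_of_le' hp'
    have hq : q < 2 ^ m := by omega
    rcases lt_or_ge (2 ^ m) n with hn' | hn'
    · obtain ⟨a, ha, han, hak, hodd⟩ := ih (n := n - 2 ^ m) (by omega) hk hq (by omega)
      refine ⟨2 ^ m + a, by omega, by omega, by omega, ?_⟩
      rwa [Nat.choose_symm_of_eq_add (by omega : q + 2 ^ m = (2 ^ m + a) + (q - a)),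
        ← Nat.not_even_iff_odd, even_choose_add_two_pow_iff q (by omega),
        Nat.choose_symm ha, Nat.not_even_iff_odd]
    · obtain ⟨a, ha, han, hak, hodd⟩ := ih (k := k - 2 ^ m) hn (by omega) hq (by omega)
      refine ⟨a, by omega, han, by omega, ?_⟩
      rwa [← Nat.not_even_iff_odd, even_choose_add_two_pow_iff q (by omega),
        Nat.not_even_iff_odd]

theorem not_vanishes_of_lt_two_pow (hn : 0 < n) (hk : 0 < k) (hp : p < 2 ^ m)
    (hnk : 2 ^ m < n + k) : ¬ Vanishes n k p := fun h =>
  have ⟨i, hi, hin, hik, hodd⟩ := exists_odd_choose_of_lt_two_pow hn hk hp hnk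
  Nat.not_even_iff_odd.2 hodd (h i hi hin hik)

theorem circ_le (hn : 0 < n) (hk : 0 < k) (h : Vanishes n k p) : circ n k ≤ p :=
  Nat.sInf_le ⟨hn.trans_le (h.le hk), h⟩

theorem vanishes_circ (hn : 0 < n) (hk : 0 < k) : Vanishes n k (circ n k) :=
  (Nat.sInf_mem (s := {p | 1 ≤ p ∧ Vanishes n k p})
    ⟨n + k - 1, by omega, vanishes_of_add_le (by omega)⟩).2

end HopfStiefel

/-- the Hopf–Stiefel number is commutative, and:
(I) if `k ≤ l` then `n∘k ≤ n∘l`;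
(II) `n∘k = 2^m` iff `n ≤ 2^m`, `k ≤ 2^m` and `n + k > 2^m`;
(III) if `n ≤ 2^m` then `n∘(k + 2^m) = (n∘k) + 2^m`. -/
theorem stmt13 :
    (∀ n k : ℕ, 0 < n → 0 < k → circ n k = circ k n) ∧
    (∀ n k l : ℕ, 0 < n → 0 < k → k ≤ l → circ n k ≤ circ n l) ∧
    (∀ n k m : ℕ, 0 < n → 0 < k →
      (circ n k = 2 ^ m ↔ (n ≤ 2 ^ m ∧ k ≤ 2 ^ m ∧ 2 ^ m < n + k))) ∧
    (∀ n k m : ℕ, 0 < n → 0 < k → n ≤ 2 ^ m →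
      circ n (k + 2 ^ m) = circ n k + 2 ^ m) := by
  open HopfStiefel in
  refine ⟨fun n k hn hk => ?_, fun n k l hn hk hkl => ?_, fun n k m hn hk => ?_,
    fun n k m hn hk hnm => ?_⟩
  · exact (circ_le hn hk (vanishes_circ hk hn).symm).antisymm
      (circ_le hk hn (vanishes_circ hn hk).symm)
  · exact circ_le hn hk ((vanishes_circ hn (hk.trans_le hkl)).of_le hkl)
  · constructor
    · intro h
      have hvan := vanishes_circ hn hk
      rw [h] at hvan
      have hle := circ_le hn hk (vanishes_of_add_le (p := n + k - 1) (by omega))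
      exact ⟨hvan.le hk, hvan.symm.le hn, by omega⟩
    · rintro ⟨hn', hk', hnk⟩
      refine (circ_le hn hk (vanishes_two_pow hn' hk')).antisymm (not_lt.1 fun hlt => ?_)
      exact not_vanishes_of_lt_two_pow hn hk hlt hnk (vanishes_circ hn hk)
  · have hk' : 0 < k + 2 ^ m := by omega
    have hvan := vanishes_circ hn hk'
    have hbig : k + 2 ^ m ≤ circ n (k + 2 ^ m) := hvan.symm.le hn
    obtain ⟨q, hq⟩ := Nat.exists_eq_add_of_le' (le_of_add_le_right hbig)
    rw [hq] at hvan ⊢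
    have hle := circ_le hn hk ((vanishes_add_two_pow_iff hnm).1 hvan)
    have hge := circ_le hn hk' ((vanishes_add_two_pow_iff hnm).2 (vanishes_circ hn hk))
    omega
end
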